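/- arXiv:1601.01487 — 2 statements merged into one kernel-verified Lean document; each statement's English description precedes it below -/
import Mathlib

section
/- Many-one polynomial reductions between TFNP problems induce polynomial reductions between their canonical disjoint coNP pairs. -/
def nlen (x : ℕ) : ℕ := Nat.size x

structure TFNPpb (PTR : (ℕ → ℕ → Prop) → Prop) where
  p : Polynomial ℕ
  R : ℕ → ℕ → Prop
  dec : PTR R
  total : ∀ x, ∃ y, nlen y ≤ p.eval (nlen x) ∧ R x y

def Sol {PTR} (A : TFNPpb PTR) (x y : ℕ) : Prop :=
  nlen y ≤ A.p.eval (nlen x) ∧ A.R x y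

/-- Membership of a coded pair `u = (x, C)` (of an input and a Boolean circuit,
circuits are coded by numbers with evaluation map `ceval`) in the component `i`
of the canonical disjoint coNP pair of a TFNP problem `A`:
every solution `y` of `A` at `x` has `C(y) = i`. -/
def CanonMem {PTR} (ceval : ℕ → ℕ → Bool) (A : TFNPpb PTR) (i : Bool) (u : ℕ) : Prop :=
  ∀ y, Sol A (Nat.unpair u).1 y → ceval (Nat.unpair u).2 y = i

theorem canonMem_pair_iff {PTR} {ceval : ℕ → ℕ → Bool} {A : TFNPpb PTR} {i : Bool}
    {x C : ℕ} : CanonMem ceval A i (Nat.pair x C) ↔ ∀ y, Sol A x y → ceval C y = i := by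
  simp only [CanonMem, Nat.unpair_pair]

theorem CanonMem.of_reduction {PTR} {ceval : ℕ → ℕ → Bool} {P Q : TFNPpb PTR} {i : Bool}
    {x x' C C' : ℕ} {g : ℕ → ℕ} (hred : ∀ z, Sol Q x' z → Sol P x (g z))
    (hC' : ∀ z, Sol Q x' z → ceval C' z = ceval C (g z))
    (hmem : CanonMem ceval P i (Nat.pair x C)) : CanonMem ceval Q i (Nat.pair x' C') := by
  rw [canonMem_pair_iff] at hmem ⊢
  intro z hz
  rw [hC' z hz]
  exact hmem _ (hred z hz)

theorem manyone_reduces_canonical_coNP_pairs_general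
    (PTR : (ℕ → ℕ → Prop) → Prop)
    (PTF : (ℕ → ℕ) → Prop)
    (ceval : ℕ → ℕ → Bool)
    (P Q : TFNPpb PTR)
    -- solutions have exact length p(|x|), resp. q(|x|)
    (hQlen : ∀ x y, Q.R x y → nlen y = Q.p.eval (nlen x))
    -- the many-one polynomial reduction (f, g) of P to Q
    (f : ℕ → ℕ) (g : ℕ → ℕ → ℕ)
    (hred : ∀ x z, Sol Q (f x) z → Sol P x (g x z))
    -- the (polynomial-time) circuit transformer D, with D x C computing y ↦ C (g x y)
    (D : ℕ → ℕ → ℕ)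
    (hD : ∀ x C y, nlen y = Q.p.eval (nlen (f x)) → ceval (D x C) y = ceval C (g x y))
    (h : ℕ → ℕ)
    (hdef : h = fun u => Nat.pair (f (Nat.unpair u).1) (D (Nat.unpair u).1 (Nat.unpair u).2))
    (hpt : PTF h) :
    PTF h ∧ ∀ (i : Bool) (u : ℕ), CanonMem ceval P i u → CanonMem ceval Q i (h u) := by
  refine ⟨hpt, fun i u hu => ?_⟩
  obtain ⟨x, C, rfl⟩ : ∃ x C, u = Nat.pair x C := ⟨_, _, (Nat.pair_unpair u).symm⟩
  have hhu : h (Nat.pair x C) = Nat.pair (f x) (D x C) := by simp [hdef]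
  rw [hhu]
  -- `D x C` is only promised to simulate `C ∘ g x` on inputs of the exact solution length of `Q`
  exact hu.of_reduction (hred x) fun z hz => hD x C z (hQlen _ _ hz.2)

/-- a many-one polynomial reduction `(f,g)` of the TFNP problem `P` to `Q`
(whose solutions have exact lengths `p(|x|)`, resp. `q(|x|)`) induces, via
`h (x, C) = (f x, D x C)` where the circuit `D x C` computes `y ↦ C (g x y)`,
a polynomial reduction of the canonical disjoint coNP pair of `P` to that of `Q`. -/
theorem manyone_reduces_canonical_coNP_pairs
    (PTR : (ℕ → ℕ → Prop) → Prop)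
    (PTF : (ℕ → ℕ) → Prop) (PTF2 : (ℕ → ℕ → ℕ) → Prop)
    (ceval : ℕ → ℕ → Bool)
    (P Q : TFNPpb PTR)
    -- solutions have exact length p(|x|), resp. q(|x|)
    (hPlen : ∀ x y, P.R x y → nlen y = P.p.eval (nlen x))
    (hQlen : ∀ x y, Q.R x y → nlen y = Q.p.eval (nlen x))
    -- the many-one polynomial reduction (f, g) of P to Q
    (f : ℕ → ℕ) (g : ℕ → ℕ → ℕ) (hf : PTF f) (hg : PTF2 g)
    (hred : ∀ x z, Sol Q (f x) z → Sol P x (g x z))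
    -- the (polynomial-time) circuit transformer D, with D x C computing y ↦ C (g x y)
    (D : ℕ → ℕ → ℕ)
    (hD : ∀ x C y, nlen y = Q.p.eval (nlen (f x)) → ceval (D x C) y = ceval C (g x y))
    (h : ℕ → ℕ)
    (hdef : h = fun u => Nat.pair (f (Nat.unpair u).1) (D (Nat.unpair u).1 (Nat.unpair u).2))
    (hpt : PTF h) :
    PTF h ∧ ∀ (i : Bool) (u : ℕ), CanonMem ceval P i u → CanonMem ceval Q i (h u) :=
  manyone_reduces_canonical_coNP_pairs_general PTR PTF ceval P Q hQlen f g hred D hD h hdef hpt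
end

section
/- Every disjoint coNP pair is polynomially reducible to the canonical disjoint coNP pair of some TFNP problem. -/
/-- Membership in the coNP set `B_i` given by `x ∈ B_i ≡ ∀ y (|y| ≤ r_i(|x|) → β_i(x,y))`. -/
def CoNPMem (r : Bool → Polynomial ℕ) (β : Bool → ℕ → ℕ → Prop) (i : Bool) (x : ℕ) : Prop :=
  ∀ y, nlen y ≤ (r i).eval (nlen x) → β i x y

/-- The search relation of the associated TFNP problem:
`R(x, z) ≡ ∃ i ∃ y (z = (i, y) ∧ |y| ≤ r_i(|x|) ∧ ¬ β_i(x, y))`. -/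
def Rdef (r : Bool → Polynomial ℕ) (β : Bool → ℕ → ℕ → Prop) (x z : ℕ) : Prop :=
  ∃ i : Bool, (Nat.unpair z).1 = (if i then 1 else 0) ∧
    nlen (Nat.unpair z).2 ≤ (r i).eval (nlen x) ∧ ¬ β i x (Nat.unpair z).2

/-! A solution of `Rdef` at `x` is a refutation `y` of `x ∈ B_i` tagged with `i`; one exists
because `x` lies outside `B_0` or `B_1`. If `x ∈ B_i`, every solution carries the other tag
`1 - i`, which is exactly what the circuit `(i, y) ↦ 1 - i` outputs. -/

theorem nlen_pair_le (a b : ℕ) : nlen (Nat.pair a b) ≤ 2 * max (nlen a) (nlen b) := by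
  set k := max (nlen a) (nlen b)
  have hmax : max a b < 2 ^ k :=
    max_lt ((Nat.lt_size_self a).trans_le (Nat.pow_le_pow_right two_pos (le_max_left _ _)))
      ((Nat.lt_size_self b).trans_le (Nat.pow_le_pow_right two_pos (le_max_right _ _)))
  rw [nlen, Nat.size_le]
  calc Nat.pair a b < (max a b + 1) ^ 2 := Nat.pair_lt_max_add_one_sq a b
    _ ≤ (2 ^ k) ^ 2 := Nat.pow_le_pow_left hmax 2
    _ = 2 ^ (2 * k) := by rw [← pow_mul, mul_comm]

section CoNPPair

variable (r : Bool → Polynomial ℕ) (β : Bool → ℕ → ℕ → Prop)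

theorem exists_rdef_pair_of_not_coNPMem {i : Bool} {x : ℕ} (h : ¬ CoNPMem r β i x) :
    ∃ y, nlen y ≤ (r i).eval (nlen x) ∧ Rdef r β x (Nat.pair (if i then 1 else 0) y) := by
  simp only [CoNPMem, not_forall, exists_prop] at h
  obtain ⟨y, hy, hβ⟩ := h
  exact ⟨y, hy, i, by simp, by simpa using hy, by simpa using hβ⟩

-- A solution `⟨i, y⟩` has length at most `2 * max (|i|, |y|) ≤ 2 * |y| + 2`.
theorem rdef_total (hdisj : ∀ x, ¬ (CoNPMem r β false x ∧ CoNPMem r β true x)) (x : ℕ) :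
    ∃ z, nlen z ≤ (2 * (r false + r true) + 2).eval (nlen x) ∧ Rdef r β x z := by
  obtain ⟨i, hi⟩ : ∃ i, ¬ CoNPMem r β i x := by
    by_contra! h
    exact hdisj x ⟨h false, h true⟩
  obtain ⟨y, hy, hR⟩ := exists_rdef_pair_of_not_coNPMem r β hi
  refine ⟨_, ?_, hR⟩
  have htag : nlen (if i then 1 else 0) ≤ 1 := by cases i <;> decide
  have hri : (r i).eval (nlen x) ≤ (r false + r true).eval (nlen x) := by
    cases i <;> simp only [Polynomial.eval_add] <;> omega
  have hpair := nlen_pair_le (if i then 1 else 0) y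
  simp only [Polynomial.eval_add, Polynomial.eval_mul, Polynomial.eval_ofNat] at hri ⊢
  omega

noncomputable def rdefProblem {PTR : (ℕ → ℕ → Prop) → Prop} (hRdec : PTR (Rdef r β))
    (hdisj : ∀ x, ¬ (CoNPMem r β false x ∧ CoNPMem r β true x)) : TFNPpb PTR where
  p := 2 * (r false + r true) + 2
  R := Rdef r β
  dec := hRdec
  total := rdef_total r β hdisj

theorem tag_eq_of_rdef_of_coNPMem {i : Bool} {x z : ℕ} (hx : CoNPMem r β i x)
    (hz : Rdef r β x z) : ((Nat.unpair z).1 == 0) = i := by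
  obtain ⟨j, htag, hlen, hβ⟩ := hz
  have hji : j ≠ i := by
    rintro rfl
    exact hβ (hx _ hlen)
  rw [htag]
  cases i <;> cases j <;> simp_all

end CoNPPair

theorem disjoint_coNP_pair_reduces_to_canonical_general
    (PTR : (ℕ → ℕ → Prop) → Prop)
    (PTF : (ℕ → ℕ) → Prop)
    (ceval : ℕ → ℕ → Bool)
    (r : Bool → Polynomial ℕ) (β : Bool → ℕ → ℕ → Prop)
    -- the pair (B_0, B_1) is disjoint
    (hdisj : ∀ x, ¬ (CoNPMem r β false x ∧ CoNPMem r β true x))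
    -- the relation Rdef is polynomial-time decidable
    (hRdec : PTR (Rdef r β))
    -- a circuit C0 computing (i, y) ↦ 1 - i
    (C0 : ℕ) (hC0 : ∀ z, ceval C0 z = ((Nat.unpair z).1 == 0))
    -- the reduction map x ↦ (x, C0) is polynomial-time
    (hpt : PTF (fun x => Nat.pair x C0)) :
    ∃ P : TFNPpb PTR, (∀ x z, P.R x z ↔ Rdef r β x z) ∧
      PTF (fun x => Nat.pair x C0) ∧
      ∀ (i : Bool) (x : ℕ), CoNPMem r β i x → CanonMem ceval P i (Nat.pair x C0) := by
  refine ⟨rdefProblem r β hRdec hdisj, fun _ _ => Iff.rfl, hpt, ?_⟩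
  intro i x hx z hz
  rw [Nat.unpair_pair] at hz ⊢
  rw [hC0]
  exact tag_eq_of_rdef_of_coNPMem r β hx hz.2

/-- every disjoint coNP pair `(B_0, B_1)` is polynomially reducible to the
canonical disjoint coNP pair of some TFNP problem, namely the problem with relation
`Rdef`, via the reduction `x ↦ (x, C)` where the circuit `C` computes `(i, y) ↦ 1 - i`. -/
theorem disjoint_coNP_pair_reduces_to_canonical
    (PTR : (ℕ → ℕ → Prop) → Prop)
    (PTF : (ℕ → ℕ) → Prop)
    (ceval : ℕ → ℕ → Bool)
    (r : Bool → Polynomial ℕ) (β : Bool → ℕ → ℕ → Prop)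
    (hdec : ∀ i, PTR (β i))
    -- the pair (B_0, B_1) is disjoint
    (hdisj : ∀ x, ¬ (CoNPMem r β false x ∧ CoNPMem r β true x))
    -- the relation Rdef is polynomial-time decidable
    (hRdec : PTR (Rdef r β))
    -- a circuit C0 computing (i, y) ↦ 1 - i
    (C0 : ℕ) (hC0 : ∀ z, ceval C0 z = ((Nat.unpair z).1 == 0))
    -- the reduction map x ↦ (x, C0) is polynomial-time
    (hpt : PTF (fun x => Nat.pair x C0)) :
    ∃ P : TFNPpb PTR, (∀ x z, P.R x z ↔ Rdef r β x z) ∧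
      PTF (fun x => Nat.pair x C0) ∧
      ∀ (i : Bool) (x : ℕ), CoNPMem r β i x → CanonMem ceval P i (Nat.pair x C0) :=
  disjoint_coNP_pair_reduces_to_canonical_general PTR PTF ceval r β hdisj hRdec C0 hC0 hpt
end
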